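/- Let $p$ be a probability mass function on a finite set $\mathcal{C}$, $\bar g : \mathcal{C} \to \mathbb{R}$, and let $w = p$ (the optimal proposal). For i.i.d. samples $C^{(1)},\dots,C^{(N)}$ from a proposal $q$ with weights as in Theorem 2, if $q$ satisfies $q = \pi_0$ (the prior) and the posterior equals the point mass $\delta_{C^{tr}}$ with $C^{tr} \sim \pi_0$, then the MSE of the importance sampling estimator of $\mathbb{E}[\bar g]$, averaged over $C^{tr}$, is at least $\frac{1}{N}\mathrm{Var}_{\pi_0}(\bar g) \cdot |\mathcal{C}| \cdot \min_C \pi_0(C) \cdot \frac{1}{\max_C \pi_0(C)}$; in the uniform-prior case $\pi_0(C) = 1/|\mathcal{C}|$, the averaged MSE equals $\frac{1}{N}\big(|\mathcal{C}|\,\mathbb{E}_{\pi_0}[\bar g^2] - (\mathbb{E}_{\pi_0}[\bar g])^2\big) \ge \frac{|\mathcal{C}|}{N}\mathrm{Var}_{\pi_0}(\bar g)$. -/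

import Mathlib

open Classical Finset

section WeightedSums

variable {ι : Type*} [Fintype ι] (w g : ι → ℝ)

theorem sum_mul_sub_sum_mul_sq (hw : ∑ i, w i = 1) :
    ∑ i, w i * (g i - ∑ j, w j * g j) ^ 2 = ∑ i, w i * g i ^ 2 - (∑ i, w i * g i) ^ 2 := by
  set m := ∑ j, w j * g j
  calc ∑ i, w i * (g i - m) ^ 2
      = ∑ i, w i * g i ^ 2 - 2 * m * ∑ i, w i * g i + m ^ 2 * ∑ i, w i := by
        simp only [mul_sum, ← sum_sub_distrib, ← sum_add_distrib]
        exact sum_congr rfl fun i _ => by ring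
    _ = ∑ i, w i * g i ^ 2 - m ^ 2 := by rw [hw]; ring

variable [DecidableEq ι]

theorem sum_indicator_sq_div_mul (j : ι) :
    ∑ i, (if i = j then (1 : ℝ) else 0) ^ 2 / w i * g i ^ 2 = g j ^ 2 / w j := by
  simp [ite_pow, div_eq_inv_mul]

/-- Against the point mass at `j`, the importance weight is `1 / w j`; averaging over `j ∼ w`
cancels it, leaving the plain sum of `g ^ 2`. -/
theorem sum_mul_pointMass_secondMoment (hw₀ : ∀ i, w i ≠ 0) (hw : ∑ i, w i = 1) (c a : ℝ) :
    ∑ j, w j * (c * ((∑ i, (if i = j then (1 : ℝ) else 0) ^ 2 / w i * g i ^ 2) - a))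
      = c * (∑ i, g i ^ 2 - a) := by
  simp only [sum_indicator_sq_div_mul]
  calc ∑ j, w j * (c * (g j ^ 2 / w j - a))
      = ∑ j, (c * g j ^ 2 - c * a * w j) :=
        sum_congr rfl fun j _ => by field_simp [hw₀ j]
    _ = c * (∑ i, g i ^ 2 - a) := by rw [sum_sub_distrib, ← mul_sum, ← mul_sum, hw]; ring

end WeightedSums

theorem stmt_13_general {𝒞 : Type*} [Fintype 𝒞] [Nonempty 𝒞]
    (gbar : 𝒞 → ℝ) (N : ℕ)
    (u : 𝒞 → ℝ) (hu : u = fun _ => (1 : ℝ) / Fintype.card 𝒞) :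
    (∑ Ctr : 𝒞, u Ctr *
        ((1 / (N : ℝ)) *
          ((∑ C : 𝒞, (if C = Ctr then (1 : ℝ) else 0) ^ 2 / u C * gbar C ^ 2)
            - (∑ C : 𝒞, u C * gbar C) ^ 2))
      = (1 / (N : ℝ)) *
          ((Fintype.card 𝒞 : ℝ) * (∑ C : 𝒞, u C * gbar C ^ 2)
            - (∑ C : 𝒞, u C * gbar C) ^ 2)) ∧
    ((Fintype.card 𝒞 : ℝ) / (N : ℝ) *
        (∑ C : 𝒞, u C * (gbar C - ∑ C', u C' * gbar C') ^ 2)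
      ≤ (1 / (N : ℝ)) *
          ((Fintype.card 𝒞 : ℝ) * (∑ C : 𝒞, u C * gbar C ^ 2)
            - (∑ C : 𝒞, u C * gbar C) ^ 2)) := by
  have hk : (1 : ℝ) ≤ Fintype.card 𝒞 := by exact_mod_cast Fintype.card_pos
  have hu₀ : ∀ C, u C ≠ 0 := fun C => by rw [hu]; positivity
  have hu₁ : ∑ C, u C = 1 := by
    rw [hu, sum_const, card_univ, nsmul_eq_mul]; field_simp
  have hsq : ∑ C, gbar C ^ 2 = Fintype.card 𝒞 * ∑ C, u C * gbar C ^ 2 := by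
    rw [hu, ← mul_sum, ← mul_assoc]; field_simp
  refine ⟨by rw [sum_mul_pointMass_secondMoment u gbar hu₀ hu₁, hsq], ?_⟩
  rw [sum_mul_sub_sum_mul_sq u gbar hu₁]
  have hm := sq_nonneg (∑ C, u C * gbar C)
  calc (Fintype.card 𝒞 : ℝ) / N * (∑ C, u C * gbar C ^ 2 - (∑ C, u C * gbar C) ^ 2)
      = 1 / N * (Fintype.card 𝒞 * (∑ C, u C * gbar C ^ 2 - (∑ C, u C * gbar C) ^ 2)) := by
        ring
    _ ≤ _ := by gcongr; nlinarith

/-- Specialization of the exponential-MSE lower bound to the uniform prior: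
with prior and proposal uniform over `𝒞` and the posterior equal to the point
mass at a uniformly random true hypothesis `C^{tr}`, the MSE of the
importance-sampling estimator, averaged over `C^{tr}`, equals
`(1/N)(|𝒞|·E_u[ḡ²] − (E_u[ḡ])²)`, which is at least `(|𝒞|/N)·Var_u(ḡ)`. -/
theorem stmt_13 {𝒞 : Type*} [Fintype 𝒞] [Nonempty 𝒞]
    (gbar : 𝒞 → ℝ) (N : ℕ) (hN : 0 < N)
    (u : 𝒞 → ℝ) (hu : u = fun _ => (1 : ℝ) / Fintype.card 𝒞) :
    (∑ Ctr : 𝒞, u Ctr *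
        ((1 / (N : ℝ)) *
          ((∑ C : 𝒞, (if C = Ctr then (1 : ℝ) else 0) ^ 2 / u C * gbar C ^ 2)
            - (∑ C : 𝒞, u C * gbar C) ^ 2))
      = (1 / (N : ℝ)) *
          ((Fintype.card 𝒞 : ℝ) * (∑ C : 𝒞, u C * gbar C ^ 2)
            - (∑ C : 𝒞, u C * gbar C) ^ 2)) ∧
    ((Fintype.card 𝒞 : ℝ) / (N : ℝ) *
        (∑ C : 𝒞, u C * (gbar C - ∑ C', u C' * gbar C') ^ 2)
      ≤ (1 / (N : ℝ)) *
          ((Fintype.card 𝒞 : ℝ) * (∑ C : 𝒞, u C * gbar C ^ 2)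
            - (∑ C : 𝒞, u C * gbar C) ^ 2)) :=
  stmt_13_general gbar N u hu
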